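/- There are no polynomials f, g ∈ ℚ[t] with deg f = 2 and deg g = 6 such that f·g divides f⁴ − 4g² + 4 in ℚ[t]. -/

import Mathlib

/-!
From `f * g ∣ f⁴ - 4g² + 4` we get `f ∣ g² - 1` and `g ∣ f⁴ + 4 = ((f + 1)² + 1)((f - 1)² + 1)`.
Both factors are positive on `ℝ`, so their divisors have even degree and no real root. Hence,
up to the sign of `f`, `g = p * q` with `p ∣ (f + 1)² + 1` of degree 2 and `q` a scalar multiple
of `(f - 1)² + 1`. Since `(f - 1)² + 1 ≡ 2 (mod f)`, this gives `μ g ≡ 2p (mod f)`, so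
`f ∣ (2p - μ)(2p + μ)`. If `f` divides one of the factors then `f` is constant modulo `p`, which
makes `(f + 1)² + 1` a nonzero constant modulo `p`. Otherwise `f` splits into rational linear
factors, at whose roots `p` takes the values `±μ/2`; so `p` changes sign and has a real root.
-/

open Polynomial

namespace Polynomial

theorem exists_eval_eq_zero_of_eval_mul_eval_nonpos (P : ℝ[X]) {a b : ℝ}
    (h : P.eval a * P.eval b ≤ 0) : ∃ x, P.eval x = 0 := by
  have h0 : (0 : ℝ) ∈ Set.uIcc (P.eval a) (P.eval b) := by
    rcases mul_nonpos_iff.mp h with ⟨ha, hb⟩ | ⟨ha, hb⟩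
    · exact Set.mem_uIcc.mpr (Or.inr ⟨hb, ha⟩)
    · exact Set.mem_uIcc.mpr (Or.inl ⟨ha, hb⟩)
  obtain ⟨x, -, hx⟩ := intermediate_value_uIcc P.continuous.continuousOn h0
  exact ⟨x, hx⟩

theorem exists_eval_eq_zero_of_odd_natDegree {P : ℝ[X]} (hP : Odd P.natDegree) :
    ∃ x, P.eval x = 0 := by
  -- `P x * P (-x)` has leading coefficient `-(leadingCoeff P)²`, so it is negative for large `x`.
  set Q := P * P.comp (-X)
  have hP0 : P ≠ 0 := by rintro rfl; simp at hP
  have hlc : Q.leadingCoeff = -P.leadingCoeff ^ 2 := by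
    simp [Q, leadingCoeff_comp, hP.neg_one_pow, sq]
  have hQ : 0 < Q.degree := by
    rw [← natDegree_pos_iff_degree_pos, natDegree_mul' (by simp [hP0])]
    simpa [natDegree_comp] using hP.pos
  obtain ⟨b, hb⟩ := ((Q.tendsto_atBot_of_leadingCoeff_nonpos hQ
    (by rw [hlc]; exact neg_nonpos.mpr (sq_nonneg _))).eventually_le_atBot 0).exists
  exact P.exists_eval_eq_zero_of_eval_mul_eval_nonpos (a := b) (b := -b) (by simpa [Q] using hb)

theorem aeval_ne_zero_of_dvd_sq_add_one {R A : Type*} [CommSemiring R] [CommRing A]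
    [LinearOrder A] [IsStrictOrderedRing A] [Algebra R A] {p F : R[X]} (h : p ∣ F ^ 2 + 1)
    (x : A) : aeval x p ≠ 0 := by
  obtain ⟨q, hq⟩ := h
  intro hx
  have := congrArg (aeval x) hq
  simp only [map_add, map_pow, map_one, map_mul, hx, zero_mul] at this
  nlinarith [sq_nonneg (aeval x F)]

theorem even_natDegree_of_forall_aeval_ne_zero {p : ℚ[X]} (hp : ∀ x : ℝ, aeval x p ≠ 0) :
    Even p.natDegree := by
  by_contra hodd
  obtain ⟨x, hx⟩ := exists_eval_eq_zero_of_odd_natDegree (P := p.map (algebraMap ℚ ℝ))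
    (by rwa [natDegree_map, ← Nat.not_even_iff_odd])
  exact hp x (by rwa [eval_map_algebraMap] at hx)

theorem eval_mul_eval_pos_of_forall_aeval_ne_zero {p : ℚ[X]} (hp : ∀ x : ℝ, aeval x p ≠ 0)
    (α β : ℚ) : 0 < p.eval α * p.eval β := by
  by_contra! h
  have hcast (γ : ℚ) : aeval (γ : ℝ) p = p.eval γ :=
    aeval_algebraMap_apply_eq_algebraMap_eval γ p
  obtain ⟨x, hx⟩ := (p.map (algebraMap ℚ ℝ)).exists_eval_eq_zero_of_eval_mul_eval_nonpos
    (a := α) (b := β) (by simp only [eval_map_algebraMap, hcast]; exact_mod_cast h)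
  exact hp x (by rwa [eval_map_algebraMap] at hx)

theorem natDegree_sq_add_one {R : Type*} [Semiring R] [NoZeroDivisors R] (F : R[X]) :
    (F ^ 2 + 1).natDegree = 2 * F.natDegree := by
  rw [← C_1, natDegree_add_C, natDegree_pow, mul_comm]

section LinearOrderedField

variable {K : Type*} [Field K] [LinearOrder K] [IsStrictOrderedRing K]

theorem sq_add_one_ne_zero (F : K[X]) : F ^ 2 + 1 ≠ 0 := fun hF ↦
  aeval_ne_zero_of_dvd_sq_add_one (dvd_refl _) (0 : K) (by rw [hF, map_zero])

theorem natDegree_le_of_dvd_sq_add_one {p F : K[X]} (h : p ∣ F ^ 2 + 1) :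
    p.natDegree ≤ 2 * F.natDegree :=
  natDegree_sq_add_one F ▸ natDegree_le_of_dvd h (sq_add_one_ne_zero F)

theorem natDegree_eq_zero_of_dvd_of_dvd_C_mul_add_C {p f : K[X]} {a μ c : K} (hμ : μ ≠ 0)
    (h : p ∣ (f + C a) ^ 2 + 1) (h' : p ∣ C μ * f + C c) : p.natDegree = 0 := by
  have key : C (μ ^ 2) * ((f + C a) ^ 2 + 1) =
      (C μ * f + C c) * (C μ * f + C (2 * μ * a - c)) + C ((c - μ * a) ^ 2 + μ ^ 2) := by
    simp only [map_add, map_sub, map_mul, map_pow, map_ofNat]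
    ring
  have hdvd : p ∣ C ((c - μ * a) ^ 2 + μ ^ 2) :=
    (dvd_add_right (h'.mul_right _)).mp (key ▸ h.mul_left _)
  exact Nat.le_zero.mp <|
    (natDegree_le_of_dvd hdvd (C_ne_zero.mpr (by positivity))).trans_eq (natDegree_C _)

theorem not_dvd_C_mul_sub_C {p f : K[X]} {a k c : K} (hp : p ∣ (f + C a) ^ 2 + 1)
    (hp0 : 0 < p.natDegree) (hpf : p.natDegree ≤ f.natDegree) (hk : k ≠ 0) :
    ¬ f ∣ C k * p - C c := by
  intro hdvd
  have hdeg : (C k * p - C c).natDegree = p.natDegree := by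
    rw [natDegree_sub_C, natDegree_C_mul hk]
  obtain ⟨u, hu⟩ := associated_of_dvd_of_natDegree_le hdvd
    (by rintro h; rw [h, natDegree_zero] at hdeg; omega) (by omega)
  obtain ⟨μ, hμ, hCμ⟩ := isUnit_iff.mp u.isUnit
  have : p ∣ C μ * f + C c := ⟨C k, by rw [← hCμ] at hu; linear_combination hu⟩
  have := natDegree_eq_zero_of_dvd_of_dvd_C_mul_add_C hμ.ne_zero hp this
  omega

end LinearOrderedField

end Polynomial

theorem not_dvd_sq_sub_one_of_dvd_C_mul_sub_C_mul {f g p : ℚ[X]} {a c k : ℚ}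
    (hf : f.natDegree = 2) (hp : p ∣ (f + C a) ^ 2 + 1) (hpd : p.natDegree = 2) (hk : k ≠ 0)
    (hg : f ∣ C c * g - C k * p) : ¬ f ∣ g ^ 2 - 1 := by
  intro hfg
  have hprod : f ∣ (C k * p - C c) * (C k * p - C (-c)) := by
    have : (C k * p - C c) * (C k * p - C (-c)) =
        C c ^ 2 * (g ^ 2 - 1) - (C c * g - C k * p) * (C c * g + C k * p) := by
      rw [map_neg]; ring
    rw [this]
    exact dvd_sub (hfg.mul_left _) (hg.mul_right _)
  obtain ⟨e₁, e₂, h₁, h₂, rfl⟩ := exists_dvd_and_dvd_of_dvd_mul hprod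
  have he₁ : e₁ ≠ 0 := by rintro rfl; simp at hf
  have he₂ : e₂ ≠ 0 := by rintro rfl; simp at hf
  have hsum := natDegree_mul he₁ he₂
  have hroot {e : ℚ[X]} {d : ℚ} (he : e.natDegree = 1) (hd : e ∣ C k * p - C d) :
      ∃ α, k * p.eval α = d := by
    obtain ⟨α, hα⟩ :=
      exists_root_of_degree_eq_one ((degree_eq_iff_natDegree_eq_of_pos one_pos).mpr he)
    have := (hα.dvd hd).eq_zero
    simp only [eval_sub, eval_mul, eval_C] at this
    exact ⟨α, by linarith⟩
  rcases (by omega : e₁.natDegree = 0 ∨ e₁.natDegree = 1 ∧ e₂.natDegree = 1 ∨ e₂.natDegree = 0)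
    with h | ⟨h₁', h₂'⟩ | h
  · have hu : IsUnit e₁ := isUnit_iff_degree_eq_zero.mpr ((degree_eq_iff_natDegree_eq he₁).mpr h)
    exact not_dvd_C_mul_sub_C hp (by omega) (by omega) hk (hu.mul_left_dvd.mpr h₂)
  · obtain ⟨α, hα⟩ := hroot h₁' h₁
    obtain ⟨β, hβ⟩ := hroot h₂' h₂
    have hpos := eval_mul_eval_pos_of_forall_aeval_ne_zero (aeval_ne_zero_of_dvd_sq_add_one hp) α β
    have : k ^ 2 * (p.eval α * p.eval β) = -c ^ 2 := by
      linear_combination (k * eval β p) * hα + c * hβ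
    have hk2 : 0 < k ^ 2 := by positivity
    nlinarith [mul_pos hk2 hpos]
  · have hu : IsUnit e₂ := isUnit_iff_degree_eq_zero.mpr ((degree_eq_iff_natDegree_eq he₂).mpr h)
    exact not_dvd_C_mul_sub_C hp (by omega) (by omega) hk (hu.mul_right_dvd.mpr h₁)

theorem not_dvd_mul_sq_sub_one {f p q : ℚ[X]} {a : ℚ} (hf : f.natDegree = 2)
    (hp : p ∣ (f + C a) ^ 2 + 1) (hpd : p.natDegree = 2)
    (hq : q ∣ (f - C a) ^ 2 + 1) (hqd : q.natDegree = 4) : ¬ f ∣ (p * q) ^ 2 - 1 := by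
  have hB : ((f - C a) ^ 2 + 1).natDegree = 4 := by
    rw [natDegree_sq_add_one, natDegree_sub_C, hf]
  obtain ⟨u, hu⟩ := associated_of_dvd_of_natDegree_le hq (sq_add_one_ne_zero _) (by omega)
  obtain ⟨μ, -, hμ⟩ := isUnit_iff.mp u.isUnit
  -- modulo `f`, `(f - a) ^ 2 + 1 ≡ a ^ 2 + 1`
  refine not_dvd_sq_sub_one_of_dvd_C_mul_sub_C_mul (c := μ) (k := a ^ 2 + 1) hf hp hpd
    (by positivity) ⟨p * (f - C (2 * a)), ?_⟩
  rw [← hμ] at hu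
  simp only [map_add, map_pow, map_mul, map_one, map_ofNat]
  linear_combination p * hu

theorem quartic_congruence_no_sol_deg2_deg6 :
    ¬ ∃ f g : ℚ[X], f.natDegree = 2 ∧ g.natDegree = 6 ∧
        f * g ∣ f ^ 4 - 4 * g ^ 2 + 4 := by
  rintro ⟨f, g, hf, hg, hdvd⟩
  have hfg : f ∣ g ^ 2 - 1 := by
    have h4 : f ∣ C 4 * (g ^ 2 - 1) := by
      have : C 4 * (g ^ 2 - 1) = f * f ^ 3 - (f ^ 4 - 4 * g ^ 2 + 4) := by rw [map_ofNat]; ring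
      rw [this]
      exact dvd_sub (dvd_mul_right _ _) ((dvd_mul_right f g).trans hdvd)
    exact (isUnit_C.mpr (by norm_num)).dvd_mul_left.mp h4
  have hgAB : g ∣ ((f + C 1) ^ 2 + 1) * ((f - C 1) ^ 2 + 1) := by
    have : ((f + C 1) ^ 2 + 1) * ((f - C 1) ^ 2 + 1) = f ^ 4 - 4 * g ^ 2 + 4 + g * (4 * g) := by
      rw [map_one]; ring
    rw [this]
    exact dvd_add ((dvd_mul_left g f).trans hdvd) (dvd_mul_right _ _)
  obtain ⟨g₁, g₂, h₁, h₂, rfl⟩ := exists_dvd_and_dvd_of_dvd_mul hgAB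
  have hg₁ : g₁ ≠ 0 := by rintro rfl; simp at hg
  have hg₂ : g₂ ≠ 0 := by rintro rfl; simp at hg
  have hd₁ := natDegree_le_of_dvd_sq_add_one h₁
  have hd₂ := natDegree_le_of_dvd_sq_add_one h₂
  rw [natDegree_add_C] at hd₁
  rw [natDegree_sub_C] at hd₂
  rw [natDegree_mul hg₁ hg₂] at hg
  obtain ⟨m, hm⟩ := even_natDegree_of_forall_aeval_ne_zero (aeval_ne_zero_of_dvd_sq_add_one h₁)
  rcases (by omega : g₁.natDegree = 2 ∨ g₂.natDegree = 2) with h | h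
  · exact not_dvd_mul_sq_sub_one hf h₁ h h₂ (by omega) hfg
  · refine not_dvd_mul_sq_sub_one (p := g₂) (q := g₁) (a := -1) hf
      (by rwa [map_neg, ← sub_eq_add_neg]) h (by rwa [map_neg, sub_neg_eq_add]) (by omega)
      (by rwa [mul_comm])
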